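/- For every integer k >= 1, the Bernoulli numbers satisfy sum_{j=1}^{k} s1(k, j) * B_j = -(k-1)!/(k+1), where s1(k,j) is the unsigned Stirling number of the first kind and B_j the j-th Bernoulli number. -/
import Mathlib


/-- `s1 n j` is the unsigned Stirling number of the first kind. -/
def s1 : ℕ → ℕ → ℕ
  | 0, 0 => 1
  | 0, _ + 1 => 0
  | _ + 1, 0 => 0
  | n + 1, j + 1 => n * s1 n (j + 1) + s1 n j

section
open Polynomial Finset

/-- The Bernoulli umbral functional: `p ↦ ∑ coeff j * B j`. -/
noncomputable def Lb : ℚ[X] →ₗ[ℚ] ℚ :=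
  Polynomial.lsum (fun n => _root_.bernoulli n • LinearMap.id)

lemma Lb_monomial (n : ℕ) (a : ℚ) : Lb (monomial n a) = a * _root_.bernoulli n := by
  simp [Lb, Polynomial.lsum_apply, Polynomial.sum_monomial_index, mul_comm]

lemma Lb_key (p : ℚ[X]) : Lb (p.comp (X + 1)) = Lb p + p.coeff 1 := by
  induction p using Polynomial.induction_on' with
  | add p q hp hq =>
    simp only [add_comp, map_add, coeff_add, hp, hq]; ring
  | monomial n a =>
    have hex : (monomial n a : ℚ[X]).comp (X + 1) = ∑ m ∈ range (n + 1),
        monomial m (a * n.choose m) := by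
      rw [← C_mul_X_pow_eq_monomial, mul_comp, C_comp, X_pow_comp, add_pow]
      simp only [one_pow, mul_one, Finset.mul_sum, ← C_mul_X_pow_eq_monomial]
      refine Finset.sum_congr rfl fun m hm => ?_
      rw [← C_eq_natCast, ← mul_assoc, mul_comm (C a) (X ^ m), mul_assoc, ← C_mul]
      exact mul_comm _ _
    have key : ∑ m ∈ range (n + 1), a * (n.choose m : ℚ) * _root_.bernoulli m
        = a * _root_.bernoulli n + (if n = 1 then a else 0) := by
      have : ∑ m ∈ range (n + 1), a * (n.choose m : ℚ) * _root_.bernoulli m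
          = a * ∑ m ∈ range (n + 1), (n.choose m : ℚ) * _root_.bernoulli m := by
        rw [Finset.mul_sum]; exact Finset.sum_congr rfl fun _ _ => by ring
      rw [this, Finset.sum_range_succ, Nat.choose_self, _root_.sum_bernoulli]
      rcases eq_or_ne n 1 with h | h <;> simp [h] <;> ring
    rw [hex, map_sum]
    simp only [Lb_monomial, coeff_monomial]
    simpa using key

lemma coeff_ascPochhammer (k j : ℕ) : (ascPochhammer ℚ k).coeff j = s1 k j := by
  induction k generalizing j with
  | zero =>
    cases j <;> simp [s1, coeff_one]
  | succ n ih =>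
    rw [ascPochhammer_succ_right]
    cases j with
    | zero =>
      rw [coeff_zero_eq_eval_zero, eval_mul, eval_add, eval_X, eval_natCast,
        ← coeff_zero_eq_eval_zero, ih 0]
      show (s1 n 0 : ℚ) * (0 + n) = ((s1 (n + 1) 0 : ℕ) : ℚ)
      cases n with
      | zero => simp [s1]
      | succ m => simp [s1]
    | succ j =>
      rw [mul_add, coeff_add, coeff_mul_X]
      have : ((ascPochhammer ℚ n) * (n : ℚ[X])).coeff (j + 1)
          = (n : ℚ) * (ascPochhammer ℚ n).coeff (j + 1) := by
        rw [← C_eq_natCast, mul_comm, coeff_C_mul]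
      rw [this, ih j, ih (j + 1)]
      show _ = ((n * s1 n (j + 1) + s1 n j : ℕ) : ℚ)
      push_cast
      ring

lemma s1_one (k : ℕ) (hk : 1 ≤ k) : s1 k 1 = (k - 1).factorial := by
  induction k with
  | zero => omega
  | succ n ih =>
    cases n with
    | zero => simp [s1]
    | succ m =>
      show (m + 1) * s1 (m + 1) 1 + s1 (m + 1) 0 = _
      rw [ih (by omega)]
      have h0 : s1 (m + 1) 0 = 0 := rfl
      rw [h0, add_zero]
      simp [Nat.factorial_succ]

lemma stirling_bernoulli_sum_aux (k : ℕ) (hk : 1 ≤ k) :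
    ∑ j ∈ Finset.Icc 1 k, (s1 k j : ℚ) * _root_.bernoulli j =
      -((k - 1).factorial : ℚ) / (k + 1) := by
  set r : ℚ[X] := ascPochhammer ℚ k with hr
  set p : ℚ[X] := (X - 1) * r with hp
  have hcomp : p.comp (X + 1) = p + ((k : ℚ) + 1) • r := by
    have h1 : p.comp (X + 1) = X * r.comp (X + 1) := by
      simp [hp, sub_comp, mul_comp]
    have h2 : X * r.comp (X + 1) = ascPochhammer ℚ (k + 1) :=
      (ascPochhammer_succ_left ℚ k).symm
    have h3 : ascPochhammer ℚ (k + 1) = r * (X + (k : ℚ[X])) :=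
      ascPochhammer_succ_right ℚ k
    rw [h1, h2, h3, hp, smul_eq_C_mul, map_add, map_one, ← C_eq_natCast]
    ring
  have hL := Lb_key p
  rw [hcomp, map_add, map_smul, smul_eq_mul] at hL
  have hcoeff : p.coeff 1 = -((k - 1).factorial : ℚ) := by
    have h0 : r.coeff 0 = 0 := by
      rw [hr, coeff_ascPochhammer]
      cases k with
      | zero => omega
      | succ n => simp [s1]
    have h1 : r.coeff 1 = ((k - 1).factorial : ℚ) := by
      rw [hr, coeff_ascPochhammer, s1_one k hk]
    have hpc : p.coeff 1 = r.coeff 0 - r.coeff 1 := by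
      rw [hp, sub_mul, one_mul, coeff_sub, coeff_X_mul]
    rw [hpc, h0, h1]; ring
  have hLr : ((k : ℚ) + 1) * Lb r = -((k - 1).factorial : ℚ) := by
    rw [hcoeff] at hL; linarith
  have hsum : Lb r = ∑ j ∈ Finset.Icc 1 k, (s1 k j : ℚ) * _root_.bernoulli j := by
    have hdeg : r.natDegree = k := ascPochhammer_natDegree ℚ k
    have h1 : Lb r = ∑ j ∈ range (k + 1), r.coeff j * _root_.bernoulli j := by
      simp only [Lb, Polynomial.lsum_apply, LinearMap.smul_apply, LinearMap.id_apply,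
        smul_eq_mul]
      rw [Polynomial.sum_over_range r (fun n => mul_zero _), hdeg]
      exact Finset.sum_congr rfl fun j _ => by ring
    have h0 : r.coeff 0 * _root_.bernoulli 0 = 0 := by
      rw [hr, coeff_ascPochhammer]
      cases k with
      | zero => omega
      | succ n => simp [s1]
    rw [h1, Finset.sum_range_succ', h0, add_zero, ← Finset.Ico_add_one_right_eq_Icc,
      Finset.sum_Ico_eq_sum_range]
    exact Finset.sum_congr rfl fun i _ => by
      rw [hr, coeff_ascPochhammer, add_comm 1 i]
  have hk1 : (k : ℚ) + 1 ≠ 0 := by positivity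
  rw [← hsum, eq_div_iff hk1]
  linear_combination hLr

end

theorem stirling_bernoulli_sum (k : ℕ) (hk : 1 ≤ k) :
    ∑ j ∈ Finset.Icc 1 k, (s1 k j : ℚ) * bernoulli j =
      -((k - 1).factorial : ℚ) / (k + 1) :=
  stirling_bernoulli_sum_aux k hk
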